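/- Let n > 3. The Poisson algebra P₀ⁿ degenerates to the Poisson algebra P₁,₄ⁿ: there exists a family g(t), t ∈ ℂ∖{0}, of invertible linear maps of ℂⁿ such that for all x, y ∈ ℂⁿ, g(t)(μ(g(t)⁻¹x, g(t)⁻¹y)) → λ(x,y) and g(t)(μ'(g(t)⁻¹x, g(t)⁻¹y)) → λ'(x,y) as t → 0 (in the standard topology of ℂⁿ), where (μ, μ') are the multiplication and bracket of P₀ⁿ and (λ, λ') those of P₁,₄ⁿ. -/

import Mathlib

open scoped BigOperators

/-- The bilinear map on `Fin n → ℂ` determined by structure constants `c`. -/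
noncomputable def sb {n : ℕ} (c : Fin n → Fin n → Fin n → ℂ) :
    (Fin n → ℂ) →ₗ[ℂ] (Fin n → ℂ) →ₗ[ℂ] (Fin n → ℂ) :=
  LinearMap.mk₂ ℂ (fun x y k => ∑ a, ∑ b, c a b k * (x a * y b))
    (fun x x' y => by
      funext k
      simp [add_mul, mul_add, Finset.sum_add_distrib])
    (fun r x y => by
      funext k
      simp only [Pi.smul_apply, smul_eq_mul, Finset.mul_sum]
      exact Finset.sum_congr rfl fun a _ => Finset.sum_congr rfl fun b _ => by ring)
    (fun x y y' => by
      funext k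
      simp [mul_add, Finset.sum_add_distrib])
    (fun r x y => by
      funext k
      simp only [Pi.smul_apply, smul_eq_mul, Finset.mul_sum]
      exact Finset.sum_congr rfl fun a _ => Finset.sum_congr rfl fun b _ => by ring)

/-- Multiplication of `P₀ⁿ`: `e_i · e_j = e_{i+j}` for `2 ≤ i+j ≤ n`. -/
noncomputable def mu0 (n : ℕ) : (Fin n → ℂ) →ₗ[ℂ] (Fin n → ℂ) →ₗ[ℂ] (Fin n → ℂ) :=
  sb (fun a b k => if (a : ℕ) + (b : ℕ) + 1 = (k : ℕ) then 1 else 0)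

/-- Multiplication of `P₁,₄ⁿ`: `e_i · e_j = e_{i+j}` for `2 ≤ i+j ≤ n−1`,
`i,j ≤ n−1`, together with `eₙ·eₙ = e_{n−1}`. -/
noncomputable def mu12 (n : ℕ) : (Fin n → ℂ) →ₗ[ℂ] (Fin n → ℂ) →ₗ[ℂ] (Fin n → ℂ) :=
  sb (fun a b k =>
    (if (a : ℕ) + (b : ℕ) + 1 = (k : ℕ) ∧ (k : ℕ) + 2 ≤ n then 1 else 0) +
    (if (a : ℕ) + 1 = n ∧ (b : ℕ) + 1 = n ∧ (k : ℕ) + 2 = n then 1 else 0))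

/-!
Write `e_1, …, e_n` for the basis of `P₀ⁿ` and pass to the basis `f_j = e_j` (`j < n`),
`f_n = i (e_1 + ⋯ + e_n)`. Since `e_n` annihilates everything,
`f_n f_j = f_n - i (f_1 + ⋯ + f_j)` and `f_n² = ∑_{k<n} (n - k) f_k + i (n - 1) f_n`,
while `f_i f_j = f_{i+j}` for `i + j < n`. Give `f_j` the weight `2j` for `j < n` and `f_n` the
weight `n - 1`. No product of two basis vectors has a component of larger weight than the sum of
their weights, so rescaling `f_j` by `t ^ weight` gives structure constants that are polynomial
in `t`; at `t = 0` only the weight-preserving ones survive, `f_i f_j = f_{i+j}` and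
`f_n² = f_{n-1}`, which is `P₁,₄ⁿ`.
-/

open Filter Topology

section StructureConstants

variable {n : ℕ}

lemma sb_apply (c : Fin n → Fin n → Fin n → ℂ) (x y : Fin n → ℂ) (k : Fin n) :
    sb c x y k = ∑ a, ∑ b, c a b k * (x a * y b) := rfl

lemma sb_single_single (c : Fin n → Fin n → Fin n → ℂ) (a b : Fin n) :
    sb c (Pi.single a 1) (Pi.single b 1) = fun k => c a b k := by
  funext k
  simp [sb_apply, Pi.single_apply]

lemma sb_comm {c : Fin n → Fin n → Fin n → ℂ} (hc : ∀ a b k, c a b k = c b a k)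
    (x y : Fin n → ℂ) : sb c x y = sb c y x := by
  funext k
  rw [sb_apply, sb_apply, Finset.sum_comm]
  simp only [hc _ _ k, mul_comm (x _)]

/-- `diag (t ^ w)`, and the identity at `t = 0`, where that is not invertible. -/
noncomputable def weightScaling (w : Fin n → ℕ) (t : ℂ) :
    (Fin n → ℂ) ≃ₗ[ℂ] (Fin n → ℂ) :=
  if ht : t = 0 then LinearEquiv.refl ℂ _
  else LinearEquiv.piCongrRight fun j =>
    LinearEquiv.smulOfNeZero ℂ ℂ (t ^ w j) (pow_ne_zero _ ht)

lemma weightScaling_apply (w : Fin n → ℕ) {t : ℂ} (ht : t ≠ 0) (x : Fin n → ℂ)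
    (j : Fin n) :
    weightScaling w t x j = t ^ w j * x j := by
  simp [weightScaling, ht]

lemma sb_weightScaling (c : Fin n → Fin n → Fin n → ℂ) (w : Fin n → ℕ)
    (hc : ∀ a b k, w a + w b < w k → c a b k = 0) {t : ℂ} (ht : t ≠ 0)
    (x y : Fin n → ℂ) :
    sb c (weightScaling w t x) (weightScaling w t y) =
      weightScaling w t (sb (fun a b k => c a b k * t ^ (w a + w b - w k)) x y) := by
  funext k
  simp only [weightScaling_apply w ht, sb_apply, Finset.mul_sum]
  refine Finset.sum_congr rfl fun a _ => Finset.sum_congr rfl fun b _ => ?_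
  rcases lt_or_ge (w a + w b) (w k) with hlt | hle
  · simp [hc a b k hlt]
  · have h : t ^ w a * t ^ w b = t ^ w k * t ^ (w a + w b - w k) := by
      rw [← pow_add, ← pow_add, Nat.add_sub_cancel' hle]
    linear_combination (c a b k * x a * y b) * h

def homogeneousPart (w : Fin n → ℕ) (c : Fin n → Fin n → Fin n → ℂ) :
    Fin n → Fin n → Fin n → ℂ :=
  fun a b k => if w a + w b = w k then c a b k else 0

theorem tendsto_weightScaling_symm_sb (c : Fin n → Fin n → Fin n → ℂ) (w : Fin n → ℕ)
    (hc : ∀ a b k, w a + w b < w k → c a b k = 0) (x y : Fin n → ℂ) :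
    Tendsto (fun t => (weightScaling w t).symm (sb c (weightScaling w t x) (weightScaling w t y)))
      (𝓝[≠] 0) (𝓝 (sb (homogeneousPart w c) x y)) := by
  have hlim : sb (homogeneousPart w c) x y =
      sb (fun a b k => c a b k * (0 : ℂ) ^ (w a + w b - w k)) x y := by
    refine congrArg (fun c => sb c x y) (funext fun a => funext fun b => funext fun k => ?_)
    rcases lt_or_ge (w a + w b) (w k) with hlt | hle
    · simp [homogeneousPart, hc a b k hlt]
    · have : w a + w b - w k = 0 ↔ w a + w b = w k := by omega
      simp only [homogeneousPart, zero_pow_eq, this, mul_ite, mul_one, mul_zero]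
  have hcont : Continuous fun t : ℂ => sb (fun a b k => c a b k * t ^ (w a + w b - w k)) x y := by
    refine continuous_pi fun k => ?_
    simp only [sb_apply]
    fun_prop
  rw [hlim]
  refine ((hcont.tendsto 0).mono_left nhdsWithin_le_nhds).congr' ?_
  filter_upwards [self_mem_nhdsWithin] with t ht
  rw [sb_weightScaling c w hc ht, LinearEquiv.symm_apply_apply]

end StructureConstants

section TruncatedPolynomials

variable {n : ℕ}

lemma mu0_single_single (a b k : Fin n) :
    mu0 n (Pi.single a 1) (Pi.single b 1) k = if (a : ℕ) + b + 1 = k then 1 else 0 := by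
  rw [mu0, sb_single_single]

lemma sum_ite_add_add_one_eq (b k : Fin n) :
    (∑ a : Fin n, if (a : ℕ) + b + 1 = k then (1 : ℂ) else 0) =
      if (b : ℕ) < k then 1 else 0 := by
  split_ifs with hbk
  · rw [Finset.sum_eq_single_of_mem ⟨k - b - 1, by omega⟩ (Finset.mem_univ _)]
    · simp only [ite_eq_left_iff]; omega
    · intro a _ ha
      exact if_neg fun h => ha (Fin.ext (by simp only; omega))
  · exact Finset.sum_eq_zero fun a _ => if_neg (by omega)

lemma mu0_one_single (b k : Fin n) :
    mu0 n 1 (Pi.single b 1) k = if (b : ℕ) < k then 1 else 0 := by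
  simp only [mu0, sb_apply, Pi.one_apply, Pi.single_apply, mul_ite, mul_one, mul_zero,
    Finset.sum_ite_eq', Finset.mem_univ, if_true, sum_ite_add_add_one_eq]

lemma mu0_one_one (k : Fin n) : mu0 n 1 1 k = (k : ℕ) := by
  simp only [mu0, sb_apply, Pi.one_apply, mul_one]
  rw [Finset.sum_comm]
  simp only [sum_ite_add_add_one_eq, ← Fin.lt_def]
  rw [Finset.sum_boole, Finset.filter_gt_eq_Iio, Fin.card_Iio]

lemma mu0_comm (x y : Fin n → ℂ) : mu0 n x y = mu0 n y x :=
  sb_comm (fun a b k => by simp only [add_comm (a : ℕ)]) x y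

lemma mu0_single_one (a k : Fin n) :
    mu0 n (Pi.single a 1) 1 k = if (a : ℕ) < k then 1 else 0 := by
  rw [mu0_comm, mu0_one_single]

end TruncatedPolynomials

section BasisChange

open Complex

variable (m : ℕ)

noncomputable def basisChange : (Fin (m + 1) → ℂ) ≃ₗ[ℂ] (Fin (m + 1) → ℂ) where
  toFun x j := (if j = Fin.last m then 0 else x j) + I * x (Fin.last m)
  invFun y j := if j = Fin.last m then -I * y (Fin.last m) else y j - y (Fin.last m)
  map_add' x y := by funext j; simp only [Pi.add_apply]; split_ifs <;> ring
  map_smul' r x := by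
    funext j
    simp only [Pi.smul_apply, smul_eq_mul, RingHom.id_apply]
    split_ifs <;> ring
  left_inv x := by
    funext j
    by_cases hj : j = Fin.last m
    · simp only [hj, if_true, zero_add]
      linear_combination (-x (Fin.last m)) * I_mul_I
    · simp only [hj, if_true, if_false]
      ring
  right_inv y := by
    funext j
    by_cases hj : j = Fin.last m
    · simp only [hj, if_true, zero_add]
      linear_combination (-y (Fin.last m)) * I_mul_I
    · simp only [hj, if_true, if_false]
      linear_combination (-y (Fin.last m)) * I_mul_I

lemma basisChange_apply (x : Fin (m + 1) → ℂ) (j : Fin (m + 1)) :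
    basisChange m x j = (if j = Fin.last m then 0 else x j) + I * x (Fin.last m) := rfl

lemma basisChange_single_last : basisChange m (Pi.single (Fin.last m) 1) = I • 1 := by
  funext j
  by_cases hj : j = Fin.last m <;> simp [basisChange_apply, hj]

lemma basisChange_single_castSucc (a : Fin m) :
    basisChange m (Pi.single a.castSucc 1) = Pi.single a.castSucc 1 := by
  funext j
  by_cases hj : j = Fin.last m <;> simp [basisChange_apply, hj, Pi.single_apply]

/-- The structure constants of `P₀^{m+1}` in the basis `basisChange m (Pi.single j 1)`. -/
noncomputable def basisChangeConst (a b k : Fin (m + 1)) : ℂ :=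
  if (a : ℕ) = m ∧ (b : ℕ) = m then if (k : ℕ) = m then I * m else m - k
  else if (a : ℕ) = m ∨ (b : ℕ) = m then
    if (k : ℕ) = m then 1 else if (k : ℕ) ≤ min (a : ℕ) b then -I else 0
  else if (a : ℕ) + b + 1 < m then if (a : ℕ) + b + 1 = k then 1 else 0
  else if (a : ℕ) + b + 1 = m then if (k : ℕ) = m then -I else -1
  else 0

lemma mu0_basisChange_single (a b : Fin (m + 1)) :
    mu0 (m + 1) (basisChange m (Pi.single a 1)) (basisChange m (Pi.single b 1)) =
      basisChange m (fun k => basisChangeConst m a b k) := by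
  funext j
  rcases Fin.eq_castSucc_or_eq_last a with ⟨a, rfl⟩ | rfl <;>
  rcases Fin.eq_castSucc_or_eq_last b with ⟨b, rfl⟩ | rfl <;>
  simp only [basisChange_single_last, basisChange_single_castSucc, map_smul, LinearMap.smul_apply,
    Pi.smul_apply, mu0_one_one, mu0_one_single, mu0_single_one, mu0_single_single] <;>
  simp only [basisChange_apply, basisChangeConst, Fin.ext_iff, Fin.val_last, Fin.val_castSucc,
    smul_eq_mul] <;>
  grind [I_mul_I]

lemma mu0_basisChange (x y : Fin (m + 1) → ℂ) :
    mu0 (m + 1) (basisChange m x) (basisChange m y) =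
      basisChange m (sb (basisChangeConst m) x y) := by
  have h : (mu0 (m + 1)).compl₁₂ (basisChange m).toLinearMap (basisChange m).toLinearMap =
      (sb (basisChangeConst m)).compr₂ (basisChange m).toLinearMap :=
    LinearMap.ext_basis (Pi.basisFun ℂ _) (Pi.basisFun ℂ _) fun a b => by
      simp [sb_single_single, mu0_basisChange_single]
  exact LinearMap.congr_fun₂ h x y

/-- Indices are 0-based: this is the weight `2 (j + 1)` of `f_{j+1}`, and `m = n - 1` for `f_n`. -/
def degenerationWeight (j : Fin (m + 1)) : ℕ := if (j : ℕ) = m then m else 2 * j + 2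

lemma basisChangeConst_eq_zero_of_lt {a b k : Fin (m + 1)}
    (h : degenerationWeight m a + degenerationWeight m b < degenerationWeight m k) :
    basisChangeConst m a b k = 0 := by
  unfold degenerationWeight at h
  unfold basisChangeConst
  grind

lemma sb_homogeneousPart_basisChangeConst :
    sb (homogeneousPart (degenerationWeight m) (basisChangeConst m)) = mu12 (m + 1) := by
  have hcast_zero : m + m = m → (m : ℂ) = 0 := by
    intro h
    exact_mod_cast (by omega : m = 0)
  have hcast_pred : ∀ k : ℕ, k + 1 = m → (m : ℂ) - k = 1 := by
    rintro k rfl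
    push_cast
    ring
  refine congrArg sb (funext fun a => funext fun b => funext fun k => ?_)
  unfold homogeneousPart degenerationWeight basisChangeConst
  grind

end BasisChange

theorem stmt17_general (n : ℕ) :
    ∃ g : ℂ → ((Fin n → ℂ) ≃ₗ[ℂ] (Fin n → ℂ)), ∀ x y : Fin n → ℂ,
      Filter.Tendsto (fun t : ℂ => g t (mu0 n ((g t).symm x) ((g t).symm y)))
        (nhdsWithin (0 : ℂ) {(0 : ℂ)}ᶜ) (nhds (mu12 n x y)) ∧
      Filter.Tendsto (fun t : ℂ =>
          g t ((0 : (Fin n → ℂ) →ₗ[ℂ] (Fin n → ℂ) →ₗ[ℂ] (Fin n → ℂ)) ((g t).symm x) ((g t).symm y)))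
        (nhdsWithin (0 : ℂ) {(0 : ℂ)}ᶜ)
        (nhds ((0 : (Fin n → ℂ) →ₗ[ℂ] (Fin n → ℂ) →ₗ[ℂ] (Fin n → ℂ)) x y)) := by
  rcases n with _ | m
  · refine ⟨fun _ => LinearEquiv.refl ℂ _, fun x y => ⟨?_, ?_⟩⟩ <;>
      exact tendsto_const_nhds.congr fun _ => Subsingleton.elim _ _
  refine ⟨fun t => (basisChange m).symm.trans (weightScaling (degenerationWeight m) t).symm,
    fun x y => ⟨?_, by simp⟩⟩
  have h := tendsto_weightScaling_symm_sb (basisChangeConst m) (degenerationWeight m)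
    (fun _ _ _ => basisChangeConst_eq_zero_of_lt m) x y
  rw [sb_homogeneousPart_basisChangeConst] at h
  simpa [mu0_basisChange] using h

/-- For n > 3, the Poisson algebra `P₀ⁿ` degenerates to `P₁,₄ⁿ`
(both with zero bracket). -/
theorem stmt17 (n : ℕ) (hn : 3 < n) :
    ∃ g : ℂ → ((Fin n → ℂ) ≃ₗ[ℂ] (Fin n → ℂ)), ∀ x y : Fin n → ℂ,
      Filter.Tendsto (fun t : ℂ => g t (mu0 n ((g t).symm x) ((g t).symm y)))
        (nhdsWithin (0 : ℂ) {(0 : ℂ)}ᶜ) (nhds (mu12 n x y)) ∧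
      Filter.Tendsto (fun t : ℂ =>
          g t ((0 : (Fin n → ℂ) →ₗ[ℂ] (Fin n → ℂ) →ₗ[ℂ] (Fin n → ℂ)) ((g t).symm x) ((g t).symm y)))
        (nhdsWithin (0 : ℂ) {(0 : ℂ)}ᶜ)
        (nhds ((0 : (Fin n → ℂ) →ₗ[ℂ] (Fin n → ℂ) →ₗ[ℂ] (Fin n → ℂ)) x y)) :=
  stmt17_general n
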